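/- Let A be a category admitting equalisers, λ : FG → GF an entwining from a monad F = (F, m, e) to a comonad G = (G, δ, ε) on A, and g : Id → G a grouplike morphism. Suppose that (1) F is of descent type, i.e., the free functor φ_F : A → A_F is precomonadic (equivalently, for every object a, the diagram a →^{e_a} F(a) ⇉ FF(a) with parallel pair e_{F(a)}, F(e_a) is a coequaliser), and (2) F is G-Galois with respect to the comodule structure g̃ = λ ∘ Fg, i.e., for every object a the composite G(m_a) ∘ λ_{F(a)} ∘ F(g_{F(a)}) : FF(a) → GF(a) is an isomorphism. Then the monad F^g (the equaliser of gF and λ ∘ Fg) is isomorphic to the identity monad on A. -/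

import Mathlib

open CategoryTheory CategoryTheory.Limits

namespace Paper


variable {A : Type*} [Category A]

/-- An entwining (mixed distributive law) `λ : TG ⟶ GT` from a monad `T` to a comonad `G`. -/
structure Entwining (T : Monad A) (G : Comonad A) where
  lam : (G : A ⥤ A) ⋙ (T : A ⥤ A) ⟶ (T : A ⥤ A) ⋙ (G : A ⥤ A)
  comp_mul : ∀ a : A, T.μ.app ((G : A ⥤ A).obj a) ≫ lam.app a =
      (T : A ⥤ A).map (lam.app a) ≫ lam.app ((T : A ⥤ A).obj a) ≫
        (G : A ⥤ A).map (T.μ.app a)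
  comp_unit : ∀ a : A, T.η.app ((G : A ⥤ A).obj a) ≫ lam.app a = (G : A ⥤ A).map (T.η.app a)
  delta_comp : ∀ a : A, lam.app a ≫ G.δ.app ((T : A ⥤ A).obj a) =
      (T : A ⥤ A).map (G.δ.app a) ≫ lam.app ((G : A ⥤ A).obj a) ≫
        (G : A ⥤ A).map (lam.app a)
  eps_comp : ∀ a : A, lam.app a ≫ G.ε.app ((T : A ⥤ A).obj a) = (T : A ⥤ A).map (G.ε.app a)

namespace Entwining

variable {T : Monad A} {G : Comonad A} (E : Entwining T G)

lemma lam_natural {a b : A} (f : a ⟶ b) :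
    (T : A ⥤ A).map ((G : A ⥤ A).map f) ≫ E.lam.app b =
      E.lam.app a ≫ (G : A ⥤ A).map ((T : A ⥤ A).map f) :=
  E.lam.naturality f

/-- The value of the lifted comonad `Ĝ` on an object of `A_T`:
`Ĝ(a, h) = (G(a), G(h) ∘ λ_a)`. -/
@[simps]
def liftAlgebra (X : T.Algebra) : T.Algebra where
  A := (G : A ⥤ A).obj X.A
  a := E.lam.app X.A ≫ (G : A ⥤ A).map X.a
  unit := by
    rw [← Category.assoc, E.comp_unit, ← Functor.map_comp, X.unit]
    simp
  assoc := by
    calc T.μ.app ((G : A ⥤ A).obj X.A) ≫ E.lam.app X.A ≫ (G : A ⥤ A).map X.a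
        = (T.μ.app ((G : A ⥤ A).obj X.A) ≫ E.lam.app X.A) ≫ (G : A ⥤ A).map X.a := by
          rw [Category.assoc]
      _ = (T : A ⥤ A).map (E.lam.app X.A) ≫ E.lam.app ((T : A ⥤ A).obj X.A) ≫
            (G : A ⥤ A).map (T.μ.app X.A) ≫ (G : A ⥤ A).map X.a := by
          rw [E.comp_mul]; simp [Category.assoc]
      _ = (T : A ⥤ A).map (E.lam.app X.A) ≫ E.lam.app ((T : A ⥤ A).obj X.A) ≫
            (G : A ⥤ A).map ((T : A ⥤ A).map X.a) ≫ (G : A ⥤ A).map X.a := by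
          rw [← Functor.map_comp, X.assoc, Functor.map_comp]
      _ = (T : A ⥤ A).map (E.lam.app X.A) ≫ (T : A ⥤ A).map ((G : A ⥤ A).map X.a) ≫
            E.lam.app X.A ≫ (G : A ⥤ A).map X.a := by
          rw [← Category.assoc (E.lam.app ((T : A ⥤ A).obj X.A)), ← E.lam_natural X.a]
          simp [Category.assoc]
      _ = (T : A ⥤ A).map (E.lam.app X.A ≫ (G : A ⥤ A).map X.a) ≫
            E.lam.app X.A ≫ (G : A ⥤ A).map X.a := by
          rw [Functor.map_comp, Category.assoc]

/-- The lifting `Ĝ` of the comonad `G` to the Eilenberg–Moore category `A_T`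
along the entwining `λ`. -/
@[simps]
def liftedComonad : Comonad (T.Algebra) where
  obj X := E.liftAlgebra X
  map {X Y} f :=
    { f := (G : A ⥤ A).map f.f
      h := by
        try dsimp
        calc (T : A ⥤ A).map ((G : A ⥤ A).map f.f) ≫ E.lam.app Y.A ≫ (G : A ⥤ A).map Y.a
            = (E.lam.app X.A ≫ (G : A ⥤ A).map ((T : A ⥤ A).map f.f)) ≫
                (G : A ⥤ A).map Y.a := by
              rw [← Category.assoc, E.lam_natural f.f]
          _ = E.lam.app X.A ≫ (G : A ⥤ A).map ((T : A ⥤ A).map f.f ≫ Y.a) := by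
              rw [Category.assoc, ← Functor.map_comp]
          _ = E.lam.app X.A ≫ (G : A ⥤ A).map (X.a ≫ f.f) := by rw [f.h]
          _ = (E.lam.app X.A ≫ (G : A ⥤ A).map X.a) ≫ (G : A ⥤ A).map f.f := by
              rw [Functor.map_comp, Category.assoc] }
  map_id X := by ext; exact (G : A ⥤ A).map_id X.A
  map_comp f g := by ext; exact (G : A ⥤ A).map_comp f.f g.f
  ε :=
    { app := fun X =>
        { f := G.ε.app X.A
          h := by
            show (T : A ⥤ A).map (G.ε.app X.A) ≫ X.a = (E.lam.app X.A ≫ (G : A ⥤ A).map X.a) ≫ G.ε.app X.A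
            have hnat : (G : A ⥤ A).map X.a ≫ G.ε.app X.A =
                G.ε.app ((T : A ⥤ A).obj X.A) ≫ X.a := by
              simpa using (G.ε.naturality X.a).symm
            rw [Category.assoc, hnat, ← Category.assoc, E.eps_comp] }
      naturality := fun X Y f => by ext; exact G.ε.naturality f.f }
  δ :=
    { app := fun X =>
        { f := G.δ.app X.A
          h := by
            dsimp
            calc (T : A ⥤ A).map (G.δ.app X.A) ≫ E.lam.app ((G : A ⥤ A).obj X.A) ≫
                  (G : A ⥤ A).map (E.lam.app X.A ≫ (G : A ⥤ A).map X.a)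
                = (T : A ⥤ A).map (G.δ.app X.A) ≫ E.lam.app ((G : A ⥤ A).obj X.A) ≫
                    (G : A ⥤ A).map (E.lam.app X.A) ≫
                    (G : A ⥤ A).map ((G : A ⥤ A).map X.a) := by
                  rw [Functor.map_comp]
              _ = (E.lam.app X.A ≫ G.δ.app ((T : A ⥤ A).obj X.A)) ≫
                    (G : A ⥤ A).map ((G : A ⥤ A).map X.a) := by
                  rw [E.delta_comp]; simp [Category.assoc]
              _ = E.lam.app X.A ≫ (G : A ⥤ A).map X.a ≫ G.δ.app X.A := by
                  have hnat : (G : A ⥤ A).map X.a ≫ G.δ.app X.A =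
                      G.δ.app ((T : A ⥤ A).obj X.A) ≫
                        (G : A ⥤ A).map ((G : A ⥤ A).map X.a) := by
                    simpa using (G.δ.naturality X.a).symm
                  rw [hnat, Category.assoc]
              _ = (E.lam.app X.A ≫ (G : A ⥤ A).map X.a) ≫ G.δ.app X.A := by
                  rw [Category.assoc] }
      naturality := fun X Y f => by ext; exact G.δ.naturality f.f }
  coassoc X := by ext; exact G.coassoc X.A
  left_counit X := by ext; exact G.left_counit X.A
  right_counit X := by ext; exact G.right_counit X.A


/-- The value of the lifted monad `T̂` on an object of `A^G`: `T̂(a, θ) = (T(a), λ_a ∘ T(θ))`. -/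
@[simps]
def liftCoalgebra (X : G.Coalgebra) : G.Coalgebra where
  A := (T : A ⥤ A).obj X.A
  a := (T : A ⥤ A).map X.a ≫ E.lam.app X.A
  counit := by
    rw [Category.assoc, E.eps_comp, ← Functor.map_comp, X.counit]
    simp
  coassoc := by
    calc ((T : A ⥤ A).map X.a ≫ E.lam.app X.A) ≫ G.δ.app ((T : A ⥤ A).obj X.A)
        = (T : A ⥤ A).map X.a ≫ (T : A ⥤ A).map (G.δ.app X.A) ≫
            E.lam.app ((G : A ⥤ A).obj X.A) ≫ (G : A ⥤ A).map (E.lam.app X.A) := by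
          rw [Category.assoc, E.delta_comp]
      _ = (T : A ⥤ A).map (X.a ≫ G.δ.app X.A) ≫
            E.lam.app ((G : A ⥤ A).obj X.A) ≫ (G : A ⥤ A).map (E.lam.app X.A) := by
          rw [Functor.map_comp, Category.assoc]
      _ = (T : A ⥤ A).map X.a ≫ (T : A ⥤ A).map ((G : A ⥤ A).map X.a) ≫
            E.lam.app ((G : A ⥤ A).obj X.A) ≫ (G : A ⥤ A).map (E.lam.app X.A) := by
          rw [X.coassoc, Functor.map_comp, Category.assoc]
      _ = (T : A ⥤ A).map X.a ≫ E.lam.app X.A ≫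
            (G : A ⥤ A).map ((T : A ⥤ A).map X.a) ≫ (G : A ⥤ A).map (E.lam.app X.A) := by
          rw [← Category.assoc ((T : A ⥤ A).map ((G : A ⥤ A).map X.a)), E.lam_natural X.a]
          simp only [Category.assoc]
      _ = ((T : A ⥤ A).map X.a ≫ E.lam.app X.A) ≫
            (G : A ⥤ A).map ((T : A ⥤ A).map X.a ≫ E.lam.app X.A) := by
          rw [Functor.map_comp]
          simp only [Category.assoc]


/-- The lifting of the endofunctor `T` to `A^G`. -/
@[simps]
def liftFunctorT : G.Coalgebra ⥤ G.Coalgebra where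
  obj X := E.liftCoalgebra X
  map {X Y} f :=
    { f := (T : A ⥤ A).map f.f
      h := by
        try dsimp
        calc ((T : A ⥤ A).map X.a ≫ E.lam.app X.A) ≫ (G : A ⥤ A).map ((T : A ⥤ A).map f.f)
            = (T : A ⥤ A).map X.a ≫ E.lam.app X.A ≫
                (G : A ⥤ A).map ((T : A ⥤ A).map f.f) := by rw [Category.assoc]
          _ = (T : A ⥤ A).map X.a ≫ (T : A ⥤ A).map ((G : A ⥤ A).map f.f) ≫
                E.lam.app Y.A := by rw [← E.lam_natural f.f]
          _ = (T : A ⥤ A).map (X.a ≫ (G : A ⥤ A).map f.f) ≫ E.lam.app Y.A := by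
              rw [Functor.map_comp, Category.assoc]
          _ = (T : A ⥤ A).map (f.f ≫ Y.a) ≫ E.lam.app Y.A := by rw [f.h]
          _ = (T : A ⥤ A).map f.f ≫ (T : A ⥤ A).map Y.a ≫ E.lam.app Y.A := by
              rw [Functor.map_comp, Category.assoc] }
  map_id X := by ext; exact (T : A ⥤ A).map_id X.A
  map_comp f g := by ext; exact (T : A ⥤ A).map_comp f.f g.f

/-- The unit of the lifted monad. -/
@[simps]
def liftEta : 𝟭 (G.Coalgebra) ⟶ E.liftFunctorT where
  app X :=
    { f := T.η.app X.A
      h := by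
        show X.a ≫ (G : A ⥤ A).map (T.η.app X.A) = T.η.app X.A ≫ (T : A ⥤ A).map X.a ≫ E.lam.app X.A
        have hnat : X.a ≫ T.η.app ((G : A ⥤ A).obj X.A) =
            T.η.app X.A ≫ (T : A ⥤ A).map X.a := by
          simpa using T.η.naturality X.a
        rw [← Category.assoc, ← hnat, Category.assoc, E.comp_unit] }
  naturality X Y f := by
    ext
    show f.f ≫ T.η.app Y.A = T.η.app X.A ≫ (T : A ⥤ A).map f.f
    simpa using T.η.naturality f.f

/-- The multiplication of the lifted monad. -/
@[simps]
def liftMu : E.liftFunctorT ⋙ E.liftFunctorT ⟶ E.liftFunctorT where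
  app X :=
    { f := T.μ.app X.A
      h := by
        dsimp
        have hnat : (T : A ⥤ A).map ((T : A ⥤ A).map X.a) ≫
              T.μ.app ((G : A ⥤ A).obj X.A) = T.μ.app X.A ≫ (T : A ⥤ A).map X.a := by
          simpa using T.μ.naturality X.a
        calc ((T : A ⥤ A).map ((T : A ⥤ A).map X.a ≫ E.lam.app X.A) ≫
                E.lam.app ((T : A ⥤ A).obj X.A)) ≫ (G : A ⥤ A).map (T.μ.app X.A)
            = (T : A ⥤ A).map ((T : A ⥤ A).map X.a) ≫
                ((T : A ⥤ A).map (E.lam.app X.A) ≫ E.lam.app ((T : A ⥤ A).obj X.A) ≫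
                  (G : A ⥤ A).map (T.μ.app X.A)) := by
              rw [Functor.map_comp]
              simp only [Category.assoc]
          _ = (T : A ⥤ A).map ((T : A ⥤ A).map X.a) ≫
                T.μ.app ((G : A ⥤ A).obj X.A) ≫ E.lam.app X.A := by
              rw [← E.comp_mul]
          _ = (T.μ.app X.A ≫ (T : A ⥤ A).map X.a) ≫ E.lam.app X.A := by
              rw [← Category.assoc, hnat]
          _ = T.μ.app X.A ≫ (T : A ⥤ A).map X.a ≫ E.lam.app X.A := by
              rw [Category.assoc] }
  naturality X Y f := by
    ext
    show (T : A ⥤ A).map ((T : A ⥤ A).map f.f) ≫ T.μ.app Y.A =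
      T.μ.app X.A ≫ (T : A ⥤ A).map f.f
    simpa using T.μ.naturality f.f

/-- The lifting `T̂` of the monad `T` to the Eilenberg–Moore category `A^G`
along the entwining `λ`. -/
def liftedMonad : Monad (G.Coalgebra) where
  toFunctor := E.liftFunctorT
  η := E.liftEta
  μ := E.liftMu
  assoc X := by ext; exact T.assoc X.A
  left_unit X := by ext; exact T.left_unit X.A
  right_unit X := by ext; exact T.right_unit X.A


end Entwining

/-- A grouplike morphism `g : Id ⟶ G` for a comonad `G`. -/
structure Grouplike {A : Type*} [Category A] (G : Comonad A) where
  g : 𝟭 A ⟶ (G : A ⥤ A)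
  counit : ∀ a : A, g.app a ≫ G.ε.app a = 𝟙 a
  comul : ∀ a : A, g.app a ≫ G.δ.app a = g.app a ≫ (G : A ⥤ A).map (g.app a)


namespace Entwining

variable {A : Type*} [Category A] {F : Monad A} {G : Comonad A}
variable (E : Entwining F G) (gl : Grouplike G)

/-- The natural transformation `gF : F ⟶ GF`. -/
def gF : (F : A ⥤ A) ⟶ (F : A ⥤ A) ⋙ (G : A ⥤ A) :=
  Functor.whiskerLeft (F : A ⥤ A) gl.g

/-- The natural transformation `g̃ = λ ∘ Fg : F ⟶ GF`. -/
def tildeg : (F : A ⥤ A) ⟶ (F : A ⥤ A) ⋙ (G : A ⥤ A) :=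
  Functor.whiskerRight gl.g (F : A ⥤ A) ≫ E.lam

@[simp] lemma gF_app (a : A) : (gF (F := F) gl).app a = gl.g.app ((F : A ⥤ A).obj a) := rfl

@[simp] lemma tildeg_app (a : A) :
    (E.tildeg gl).app a = (F : A ⥤ A).map (gl.g.app a) ≫ E.lam.app a := rfl

lemma eta_equalizes_app (a : A) :
    F.η.app a ≫ (gF (F := F) gl).app a = F.η.app a ≫ (E.tildeg gl).app a := by
  have h1 := gl.g.naturality (F.η.app a)
  have h2 := F.η.naturality (gl.g.app a)
  simp only [Functor.id_map, Functor.id_obj, Functor.comp_map] at h1 h2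
  simp only [gF_app, tildeg_app]
  rw [← Category.assoc, ← h2, Category.assoc, E.comp_unit, ← h1]

lemma eta_equalizes : F.η ≫ gF (F := F) gl = F.η ≫ E.tildeg gl := by
  ext a
  exact eta_equalizes_app E gl a

variable [HasEqualizers A]

/-- The equaliser functor `F^g` of the pair `gF`, `λ ∘ Fg`. -/
noncomputable def Fg : A ⥤ A := equalizer (gF (F := F) gl) (E.tildeg gl)

/-- The equaliser inclusion `i_F : F^g ⟶ F`. -/
noncomputable def iF : E.Fg gl ⟶ (F : A ⥤ A) := equalizer.ι _ _

/-- The horizontal composite `i_F i_F : F^g F^g ⟶ FF`. -/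
noncomputable def iFiF : E.Fg gl ⋙ E.Fg gl ⟶ (F : A ⥤ A) ⋙ (F : A ⥤ A) :=
  Functor.whiskerLeft (E.Fg gl) (E.iF gl) ≫ Functor.whiskerRight (E.iF gl) (F : A ⥤ A)

/-- The canonical natural transformation `e' : Id ⟶ F^g` with `i_F ∘ e' = e`. -/
noncomputable def unitFg : 𝟭 A ⟶ E.Fg gl :=
  equalizer.lift F.η (eta_equalizes E gl)

end Entwining


namespace Entwining

variable {A : Type*} [Category A] {F : Monad A} {G : Comonad A}
variable (E : Entwining F G) (gl : Grouplike G)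

/-- `g̃_a` as a morphism of `F`-modules `(F(a), m_a) ⟶ Ĝ(F(a), m_a)`. -/
@[simps]
def tildegAlg (a : A) : F.free.obj a ⟶ E.liftedComonad.obj (F.free.obj a) where
  f := (F : A ⥤ A).map (gl.g.app a) ≫ E.lam.app a
  h := by
    try dsimp
    have hnat : (F : A ⥤ A).map ((F : A ⥤ A).map (gl.g.app a)) ≫
        F.μ.app ((G : A ⥤ A).obj a) = F.μ.app a ≫ (F : A ⥤ A).map (gl.g.app a) := by
      simpa using F.μ.naturality (gl.g.app a)
    calc (F : A ⥤ A).map ((F : A ⥤ A).map (gl.g.app a) ≫ E.lam.app a) ≫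
          E.lam.app ((F : A ⥤ A).obj a) ≫ (G : A ⥤ A).map (F.μ.app a)
        = (F : A ⥤ A).map ((F : A ⥤ A).map (gl.g.app a)) ≫
            ((F : A ⥤ A).map (E.lam.app a) ≫ E.lam.app ((F : A ⥤ A).obj a) ≫
              (G : A ⥤ A).map (F.μ.app a)) := by
          rw [Functor.map_comp]
          simp only [Category.assoc]
      _ = (F : A ⥤ A).map ((F : A ⥤ A).map (gl.g.app a)) ≫
            F.μ.app ((G : A ⥤ A).obj a) ≫ E.lam.app a := by rw [← E.comp_mul]
      _ = (F.μ.app a ≫ (F : A ⥤ A).map (gl.g.app a)) ≫ E.lam.app a := by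
          rw [← Category.assoc, hnat]
      _ = F.μ.app a ≫ (F : A ⥤ A).map (gl.g.app a) ≫ E.lam.app a := by
          rw [Category.assoc]

/-- The comparison functor `K_g : A ⥤ (A_F)^{Ĝ}`, `a ↦ ((F(a), m_a), g̃_a)`, induced by a
grouplike morphism `g`. -/
@[simps]
def Kg : A ⥤ E.liftedComonad.Coalgebra where
  obj a :=
    { A := F.free.obj a
      a := E.tildegAlg gl a
      counit := by
        ext
        show ((F : A ⥤ A).map (gl.g.app a) ≫ E.lam.app a) ≫ G.ε.app ((F : A ⥤ A).obj a) = 𝟙 ((F : A ⥤ A).obj a)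
        rw [Category.assoc, E.eps_comp, ← Functor.map_comp, gl.counit]
        simp
      coassoc := by
        ext
        dsimp
        calc ((F : A ⥤ A).map (gl.g.app a) ≫ E.lam.app a) ≫ G.δ.app ((F : A ⥤ A).obj a)
            = (F : A ⥤ A).map (gl.g.app a) ≫ (F : A ⥤ A).map (G.δ.app a) ≫
                E.lam.app ((G : A ⥤ A).obj a) ≫ (G : A ⥤ A).map (E.lam.app a) := by
              rw [Category.assoc, E.delta_comp]
          _ = (F : A ⥤ A).map (gl.g.app a ≫ G.δ.app a) ≫
                E.lam.app ((G : A ⥤ A).obj a) ≫ (G : A ⥤ A).map (E.lam.app a) := by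
              rw [Functor.map_comp, Category.assoc]
          _ = (F : A ⥤ A).map (gl.g.app a) ≫ (F : A ⥤ A).map ((G : A ⥤ A).map (gl.g.app a)) ≫
                E.lam.app ((G : A ⥤ A).obj a) ≫ (G : A ⥤ A).map (E.lam.app a) := by
              rw [gl.comul, Functor.map_comp, Category.assoc]
          _ = (F : A ⥤ A).map (gl.g.app a) ≫ E.lam.app a ≫
                (G : A ⥤ A).map ((F : A ⥤ A).map (gl.g.app a)) ≫
                (G : A ⥤ A).map (E.lam.app a) := by
              have hre := reassoc_of% (E.lam_natural (gl.g.app a))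
              rw [hre]
          _ = ((F : A ⥤ A).map (gl.g.app a) ≫ E.lam.app a) ≫
                (G : A ⥤ A).map ((F : A ⥤ A).map (gl.g.app a) ≫ E.lam.app a) := by
              rw [Functor.map_comp]
              simp only [Category.assoc] }
  map {a b} f :=
    { f := F.free.map f
      h := by
        ext
        dsimp
        have h1 : (F : A ⥤ A).map f ≫ (F : A ⥤ A).map (gl.g.app b) ≫ E.lam.app b =
            ((F : A ⥤ A).map (gl.g.app a) ≫ E.lam.app a) ≫
              (G : A ⥤ A).map ((F : A ⥤ A).map f) := by
          have := (E.tildeg gl).naturality f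
          simpa using this
        exact h1.symm }
  map_id a := by ext; dsimp; simp
  map_comp f g := by ext; dsimp; simp

end Entwining

/-!
Composing with the Galois map `γ_a = G(m_a) ∘ λ_{F a} ∘ F(g_{F a})` sends the descent pair
`e_{F a}, F(e_a)` to the pair `g_{F a}, g̃_a`, because `γ ∘ e_F = gF` and `γ ∘ Fe = g̃`. As `γ_a`
is monic, the descent fork `e_a : a ⟶ F a` is therefore also an equaliser of `gF, g̃` at `a`.
Equalisers in the functor category are computed pointwise, so `e'_a : a ⟶ F^g a` compares two
equalisers of the same pair and is an isomorphism.
-/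

lemma isIso_of_isLimit_fork {C : Type*} [Category C] {X Y : C} {f g : X ⟶ Y}
    {s t : Fork f g} (hs : IsLimit s) (ht : IsLimit t) (k : s.pt ⟶ t.pt) (hk : k ≫ t.ι = s.ι) :
    IsIso k :=
  have := IsLimit.hom_isIso hs ht (Fork.mkHom k hk)
  inferInstanceAs (IsIso ((Cone.forget _).map (Fork.mkHom k hk)))

namespace Entwining

variable {A : Type*} [Category A] {F : Monad A} {G : Comonad A}
variable (E : Entwining F G) (gl : Grouplike G)

def galoisMap (a : A) : (F : A ⥤ A).obj ((F : A ⥤ A).obj a) ⟶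
    (G : A ⥤ A).obj ((F : A ⥤ A).obj a) :=
  (F : A ⥤ A).map (gl.g.app ((F : A ⥤ A).obj a)) ≫
    E.lam.app ((F : A ⥤ A).obj a) ≫ (G : A ⥤ A).map (F.μ.app a)

lemma eta_comp_galoisMap (a : A) :
    F.η.app ((F : A ⥤ A).obj a) ≫ E.galoisMap gl a = (gF (F := F) gl).app a := by
  have hη : F.η.app ((F : A ⥤ A).obj a) ≫ (F : A ⥤ A).map (gl.g.app ((F : A ⥤ A).obj a)) =
      gl.g.app ((F : A ⥤ A).obj a) ≫ F.η.app ((G : A ⥤ A).obj ((F : A ⥤ A).obj a)) :=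
    (F.η.naturality _).symm
  rw [galoisMap, reassoc_of% hη, reassoc_of% (E.comp_unit ((F : A ⥤ A).obj a)),
    ← Functor.map_comp, F.left_unit]
  simp

lemma map_eta_comp_galoisMap (a : A) :
    (F : A ⥤ A).map (F.η.app a) ≫ E.galoisMap gl a = (E.tildeg gl).app a := by
  have hg : F.η.app a ≫ gl.g.app ((F : A ⥤ A).obj a) =
      gl.g.app a ≫ (G : A ⥤ A).map (F.η.app a) :=
    gl.g.naturality (F.η.app a)
  rw [galoisMap, ← Functor.map_comp_assoc, hg, Functor.map_comp_assoc,
    reassoc_of% (E.lam_natural (F.η.app a)), ← Functor.map_comp, F.right_unit]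
  simp

def isEqualizerUnitOfMonoGaloisMap (a : A)
    (hdesc : IsLimit (Fork.ofι
      (f := F.η.app ((F : A ⥤ A).obj a)) (g := (F : A ⥤ A).map (F.η.app a))
      (F.η.app a) (F.η.naturality (F.η.app a))))
    [Mono (E.galoisMap gl a)] :
    IsLimit (Fork.ofι (f := (gF (F := F) gl).app a) (g := (E.tildeg gl).app a)
      (F.η.app a) (E.eta_equalizes_app gl a)) :=
  Fork.isLimitOfIsos _ (isEqualizerCompMono hdesc (E.galoisMap gl a)) _
    (Iso.refl _) (Iso.refl _) (Iso.refl _)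
    (by simp [eta_comp_galoisMap]) (by simp [map_eta_comp_galoisMap])

variable [HasEqualizers A]

lemma iF_app_condition (a : A) :
    (E.iF gl).app a ≫ (gF (F := F) gl).app a = (E.iF gl).app a ≫ (E.tildeg gl).app a :=
  congrArg (NatTrans.app · a) (equalizer.condition (gF (F := F) gl) (E.tildeg gl))

noncomputable def isEqualizerIFApp (a : A) :
    IsLimit (Fork.ofι (f := (gF (F := F) gl).app a) (g := (E.tildeg gl).app a)
      ((E.iF gl).app a) (E.iF_app_condition gl a)) :=
  isLimitOfHasEqualizerOfPreservesLimit ((evaluation A A).obj a) _ _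

lemma unitFg_app_comp_iF_app (a : A) :
    (E.unitFg gl).app a ≫ (E.iF gl).app a = F.η.app a :=
  congrArg (NatTrans.app · a) (equalizer.lift_ι F.η (E.eta_equalizes gl))

end Entwining

/-- **Proposition 3.6.**  Let `A` admit equalisers, `λ : FG ⟶ GF` an entwining from a
monad `F` to a comonad `G`, and `g : Id ⟶ G` a grouplike morphism.  Assume
(1) `F` is of descent type, i.e. for every `a` the diagram `a ⟶ F(a) ⇉ FF(a)` (with
parallel pair `e_{F(a)}, F(e_a)`) is an equaliser, and
(2) `F` is `G`-Galois with respect to `g̃ = λ ∘ Fg`, i.e. for every `a` the composite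
`G(m_a) ∘ λ_{F(a)} ∘ F(g_{F(a)}) : FF(a) ⟶ GF(a)` is an isomorphism.
Then the monad `F^g` is (isomorphic to) the identity monad, i.e. the canonical monad
morphism `e' : Id ⟶ F^g` is an isomorphism. -/
theorem statement16 {A : Type*} [Category A] [HasEqualizers A]
    (F : Monad A) (G : Comonad A) (E : Entwining F G) (gl : Grouplike G)
    (hdesc : ∀ a : A, Nonempty (IsLimit (Fork.ofι
      (f := F.η.app ((F : A ⥤ A).obj a))
      (g := (F : A ⥤ A).map (F.η.app a))
      (F.η.app a) (by simpa using F.η.naturality (F.η.app a)))))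
    (hGal : ∀ a : A, IsIso ((F : A ⥤ A).map (gl.g.app ((F : A ⥤ A).obj a)) ≫
      E.lam.app ((F : A ⥤ A).obj a) ≫ (G : A ⥤ A).map (F.μ.app a))) :
    IsIso (E.unitFg gl) := by
  suffices ∀ a, IsIso ((E.unitFg gl).app a) from NatIso.isIso_of_isIso_app _
  intro a
  have : IsIso (E.galoisMap gl a) := hGal a
  exact isIso_of_isLimit_fork (E.isEqualizerUnitOfMonoGaloisMap gl a (hdesc a).some)
    (E.isEqualizerIFApp gl a) _ (E.unitFg_app_comp_iF_app gl a)

end Paper
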